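/- Pointwise uniform bound on the DAR(1) score in terms of the innovation (combining inequalities (bound-1)–(p-l) of the paper): There exists a constant C, depending only on c₁, c₂, c₃, c₄, c₅, φ₀, ω₀, α₀, such that for all real numbers y and ε, setting x = φ₀ y + ε √(ω₀ + α₀ y²), the Gaussian quasi-log-likelihood l(θ) = -(1/2) log(ω + α y²) − (x − φ y)²/(2(ω + α y²)) satisfies, for every θ = (φ, ω, α) ∈ Θ, |∂l/∂φ(θ)| ≤ C(1 + ε²), |∂l/∂ω(θ)| ≤ C(1 + ε²), and |∂l/∂α(θ)| ≤ C(1 + ε²). -/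

import Mathlib

/-!
Write `σ² = ω + α y²` (`darVar y θ`) and `u = x - φ y`. The three partial derivatives of `l` are
`u y / σ²`, `(u² / σ² - 1) / (2σ²)` and `y² (u² / σ² - 1) / (2σ²)`, so they are controlled by the
ratios `1 / σ²`, `y² / σ²` and `u² / σ²`. On `Θ` we have `σ² ≥ c₂` and `σ² ≥ c₄ y²`, which bound
the first two. For the third, `u = (φ₀ - φ) y + ε σ₀` with `σ₀² / σ² ≤ c₃ / c₂ + c₅ / c₄`, whence
`u² / σ² ≤ 2 (φ₀ - φ)² y² / σ² + 2 ε² σ₀² / σ² = O(1 + ε²)`.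
-/

open MeasureTheory ProbabilityTheory

/-- DAR(1) parameter space `Θ = {(φ, ω, α) : |φ| ≤ c₁, c₂ ≤ ω ≤ c₃, c₄ ≤ α ≤ c₅}`. -/
def darTheta (c₁ c₂ c₃ c₄ c₅ : ℝ) : Set (ℝ × ℝ × ℝ) :=
  {θ | |θ.1| ≤ c₁ ∧ c₂ ≤ θ.2.1 ∧ θ.2.1 ≤ c₃ ∧ c₄ ≤ θ.2.2 ∧ θ.2.2 ≤ c₅}

/-- DAR(1) Gaussian quasi-log-likelihood
`l(θ) = -(1/2) log(ω + α Y²) − (X − φ Y)²/(2(ω + α Y²))` for `θ = (φ, ω, α)`. -/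
noncomputable def darL (Y X : ℝ) (θ : ℝ × ℝ × ℝ) : ℝ :=
  -(1 / 2) * Real.log (θ.2.1 + θ.2.2 * Y ^ 2)
    - (X - θ.1 * Y) ^ 2 / (2 * (θ.2.1 + θ.2.2 * Y ^ 2))

def darVar (y : ℝ) (θ : ℝ × ℝ × ℝ) : ℝ := θ.2.1 + θ.2.2 * y ^ 2

theorem fderiv_darL_apply {y X : ℝ} {θ : ℝ × ℝ × ℝ} (hθ : 0 < darVar y θ)
    (v : ℝ × ℝ × ℝ) :
    fderiv ℝ (darL y X) θ v =
      (X - θ.1 * y) * y / darVar y θ * v.1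
        + ((X - θ.1 * y) ^ 2 / darVar y θ - 1) / (2 * darVar y θ) * (v.2.1 + y ^ 2 * v.2.2) := by
  have hvar : HasFDerivAt (darVar y) _ θ :=
    (hasFDerivAt_snd (𝕜 := ℝ) (p := θ)).fst.add
      ((hasFDerivAt_snd (𝕜 := ℝ) (p := θ)).snd.mul_const (y ^ 2))
  have hres := (hasFDerivAt_fst (𝕜 := ℝ) (p := θ)).mul_const y |>.const_sub X
  have hinv := (hasDerivAt_inv (by positivity)).comp_hasFDerivAt θ (hvar.const_mul 2)
  have h := ((hvar.log hθ.ne').const_mul (-(1 / 2) : ℝ)).sub (HasFDerivAt.mul (hres.pow 2) hinv)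
  have hL := h.congr_of_eventuallyEq (f₁ := darL y X) <| .of_forall fun θ => by
    simp [darL, darVar, div_eq_mul_inv]
  rw [hL.fderiv]
  simp only [one_div, smul_add, neg_smul, smul_neg, Function.comp_apply, mul_inv_rev,
    Nat.add_one_sub_one, pow_one, nsmul_eq_mul, Nat.cast_ofNat, sub_apply, add_apply, neg_apply,
    smul_apply, ContinuousLinearMap.comp_apply, ContinuousLinearMap.coe_snd', ContinuousLinearMap.coe_fst',
    smul_eq_mul]
  field_simp
  ring

theorem abs_mul_div_le_half_add {u y s : ℝ} (hs : 0 < s) :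
    |u * y / s| ≤ (u ^ 2 / s + y ^ 2 / s) / 2 := by
  calc |u * y / s| = |u| * |y| / s := by rw [abs_div, abs_mul, abs_of_pos hs]
    _ ≤ (u ^ 2 + y ^ 2) / 2 / s := by
      gcongr
      nlinarith [two_mul_le_add_sq |u| |y|, sq_abs u, sq_abs y]
    _ = (u ^ 2 / s + y ^ 2 / s) / 2 := by ring

theorem abs_sub_one_div_mul_le {r s t : ℝ} (hr : 0 ≤ r) (hs : 0 < s) (ht : 0 ≤ t) :
    |(r - 1) / (2 * s) * t| ≤ (r + 1) * (t / s) / 2 := by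
  rw [abs_mul, abs_div, abs_of_pos (by positivity : 0 < 2 * s), abs_of_nonneg ht]
  have : |r - 1| ≤ r + 1 := abs_le.mpr ⟨by linarith, by linarith⟩
  calc |r - 1| / (2 * s) * t ≤ (r + 1) / (2 * s) * t := by gcongr
    _ = (r + 1) * (t / s) / 2 := by field_simp

theorem abs_darScore_le {s u y K E a b : ℝ} (hs : 0 < s) (hK : 0 ≤ K) (hE : 1 ≤ E)
    (hu : u ^ 2 / s ≤ K * E) (ha : 1 / s ≤ a) (hb : y ^ 2 / s ≤ b) :
    |u * y / s| ≤ (K + 1) * (1 + a + b) * E ∧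
      |(u ^ 2 / s - 1) / (2 * s)| ≤ (K + 1) * (1 + a + b) * E ∧
      |(u ^ 2 / s - 1) / (2 * s) * y ^ 2| ≤ (K + 1) * (1 + a + b) * E := by
  have hr : 0 ≤ u ^ 2 / s := by positivity
  have ha₀ : 0 ≤ a := (one_div_pos.mpr hs).le.trans ha
  have hb₀ : 0 ≤ b := (div_nonneg (sq_nonneg y) hs.le).trans hb
  have hr₁ : u ^ 2 / s + 1 ≤ (K + 1) * E := by linarith
  refine ⟨(abs_mul_div_le_half_add hs).trans ?_, ?_, ?_⟩
  · nlinarith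
  · refine (mul_one ((u ^ 2 / s - 1) / (2 * s)) ▸ abs_sub_one_div_mul_le hr hs zero_le_one).trans ?_
    have : (u ^ 2 / s + 1) * (1 / s) ≤ (K + 1) * E * a := by gcongr
    nlinarith
  · refine (abs_sub_one_div_mul_le hr hs (sq_nonneg y)).trans ?_
    have : (u ^ 2 / s + 1) * (y ^ 2 / s) ≤ (K + 1) * E * b := by gcongr
    nlinarith

section ParameterSpace

variable {c₁ c₂ c₃ c₄ c₅ : ℝ} {θ θ₀ : ℝ × ℝ × ℝ} (y : ℝ)

theorem le_darVar_of_mem (hc₄ : 0 ≤ c₄) (hθ : θ ∈ darTheta c₁ c₂ c₃ c₄ c₅) :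
    c₂ ≤ darVar y θ := by
  obtain ⟨-, h₂, -, h₄, -⟩ := hθ
  unfold darVar
  nlinarith [sq_nonneg y]

theorem mul_sq_le_darVar_of_mem (hc₂ : 0 ≤ c₂) (hθ : θ ∈ darTheta c₁ c₂ c₃ c₄ c₅) :
    c₄ * y ^ 2 ≤ darVar y θ := by
  obtain ⟨-, h₂, -, h₄, -⟩ := hθ
  unfold darVar
  nlinarith [sq_nonneg y]

theorem darVar_le_of_mem (hθ : θ ∈ darTheta c₁ c₂ c₃ c₄ c₅) :
    darVar y θ ≤ c₃ + c₅ * y ^ 2 := by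
  obtain ⟨-, -, h₃, -, h₅⟩ := hθ
  unfold darVar
  nlinarith [sq_nonneg y]

theorem darVar_pos_of_mem (hc₂ : 0 < c₂) (hc₄ : 0 ≤ c₄) (hθ : θ ∈ darTheta c₁ c₂ c₃ c₄ c₅) :
    0 < darVar y θ :=
  hc₂.trans_le (le_darVar_of_mem y hc₄ hθ)

theorem one_div_darVar_le_of_mem (hc₂ : 0 < c₂) (hc₄ : 0 ≤ c₄)
    (hθ : θ ∈ darTheta c₁ c₂ c₃ c₄ c₅) : 1 / darVar y θ ≤ 1 / c₂ :=
  one_div_le_one_div_of_le hc₂ (le_darVar_of_mem y hc₄ hθ)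

theorem sq_div_darVar_le_of_mem (hc₂ : 0 < c₂) (hc₄ : 0 < c₄)
    (hθ : θ ∈ darTheta c₁ c₂ c₃ c₄ c₅) : y ^ 2 / darVar y θ ≤ 1 / c₄ := by
  have hs := darVar_pos_of_mem y hc₂ hc₄.le hθ
  rw [div_le_div_iff₀ hs hc₄, one_mul, mul_comm]
  exact mul_sq_le_darVar_of_mem y hc₂.le hθ

theorem darVar_div_darVar_le_of_mem (hc₂ : 0 < c₂) (hc₃ : 0 ≤ c₃) (hc₄ : 0 < c₄) (hc₅ : 0 ≤ c₅)
    (hθ₀ : θ₀ ∈ darTheta c₁ c₂ c₃ c₄ c₅) (hθ : θ ∈ darTheta c₁ c₂ c₃ c₄ c₅) :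
    darVar y θ₀ / darVar y θ ≤ c₃ / c₂ + c₅ / c₄ := by
  have hs := darVar_pos_of_mem y hc₂ hc₄.le hθ
  calc darVar y θ₀ / darVar y θ ≤ c₃ * (1 / darVar y θ) + c₅ * (y ^ 2 / darVar y θ) := by
        rw [mul_one_div, mul_div_assoc', ← add_div]
        gcongr
        exact darVar_le_of_mem y hθ₀
    _ ≤ c₃ * (1 / c₂) + c₅ * (1 / c₄) := by
        gcongr c₃ * ?_ + c₅ * ?_
        · exact one_div_darVar_le_of_mem y hc₂ hc₄.le hθ
        · exact sq_div_darVar_le_of_mem y hc₂ hc₄ hθ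
    _ = c₃ / c₂ + c₅ / c₄ := by ring

theorem sq_residual_div_darVar_le_of_mem (ε : ℝ) (hc₂ : 0 < c₂) (hc₃ : 0 ≤ c₃) (hc₄ : 0 < c₄)
    (hc₅ : 0 ≤ c₅) (hθ₀ : θ₀ ∈ darTheta c₁ c₂ c₃ c₄ c₅) (hθ : θ ∈ darTheta c₁ c₂ c₃ c₄ c₅) :
    (θ₀.1 * y + ε * √(darVar y θ₀) - θ.1 * y) ^ 2 / darVar y θ
      ≤ (8 * c₁ ^ 2 / c₄ + 2 * (c₃ / c₂ + c₅ / c₄)) * (1 + ε ^ 2) := by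
  have hs := darVar_pos_of_mem y hc₂ hc₄.le hθ
  have hφ : (θ₀.1 - θ.1) ^ 2 ≤ (2 * c₁) ^ 2 := by
    rw [← sq_abs]
    have htri := abs_sub θ₀.1 θ.1
    gcongr
    linarith [hθ₀.1, hθ.1]
  have hsqrt : √(darVar y θ₀) ^ 2 = darVar y θ₀ :=
    Real.sq_sqrt (hc₂.le.trans (le_darVar_of_mem y hc₄.le hθ₀))
  calc (θ₀.1 * y + ε * √(darVar y θ₀) - θ.1 * y) ^ 2 / darVar y θ
      ≤ 2 * (((θ₀.1 - θ.1) * y) ^ 2 + (ε * √(darVar y θ₀)) ^ 2) / darVar y θ := by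
        gcongr
        convert add_sq_le (a := (θ₀.1 - θ.1) * y) (b := ε * √(darVar y θ₀)) using 2
        ring
    _ = 2 * ((θ₀.1 - θ.1) ^ 2 * (y ^ 2 / darVar y θ)
          + ε ^ 2 * (darVar y θ₀ / darVar y θ)) := by
        rw [mul_pow, mul_pow, hsqrt]
        ring
    _ ≤ 2 * ((2 * c₁) ^ 2 * (1 / c₄) + ε ^ 2 * (c₃ / c₂ + c₅ / c₄)) := by
        gcongr 2 * (?_ * ?_ + ε ^ 2 * ?_)
        · exact sq_div_darVar_le_of_mem y hc₂ hc₄ hθ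
        · exact darVar_div_darVar_le_of_mem y hc₂ hc₃ hc₄ hc₅ hθ₀ hθ
    _ ≤ (8 * c₁ ^ 2 / c₄ + 2 * (c₃ / c₂ + c₅ / c₄)) * (1 + ε ^ 2) := by
        rw [← sub_nonneg]
        convert (by positivity : 0 ≤ 8 * c₁ ^ 2 / c₄ * ε ^ 2 + 2 * (c₃ / c₂ + c₅ / c₄)) using 1
        ring

end ParameterSpace

theorem stmt15_general (c₁ c₂ c₃ c₄ c₅ : ℝ)
    (hc₂ : 0 < c₂) (hc₃ : 0 < c₃) (hc₄ : 0 < c₄) (hc₅ : 0 < c₅)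
    (φ₀ ω₀ α₀ : ℝ) (hθ₀ : (φ₀, ω₀, α₀) ∈ darTheta c₁ c₂ c₃ c₄ c₅) :
    ∃ C : ℝ, ∀ y ε : ℝ, ∀ θ ∈ darTheta c₁ c₂ c₃ c₄ c₅,
      |fderiv ℝ (darL y (φ₀ * y + ε * Real.sqrt (ω₀ + α₀ * y ^ 2))) θ (1, 0, 0)|
          ≤ C * (1 + ε ^ 2) ∧
      |fderiv ℝ (darL y (φ₀ * y + ε * Real.sqrt (ω₀ + α₀ * y ^ 2))) θ (0, 1, 0)|
          ≤ C * (1 + ε ^ 2) ∧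
      |fderiv ℝ (darL y (φ₀ * y + ε * Real.sqrt (ω₀ + α₀ * y ^ 2))) θ (0, 0, 1)|
          ≤ C * (1 + ε ^ 2) := by
  set K := 8 * c₁ ^ 2 / c₄ + 2 * (c₃ / c₂ + c₅ / c₄)
  refine ⟨(K + 1) * (1 + 1 / c₂ + 1 / c₄), fun y ε θ hθ => ?_⟩
  have hs := darVar_pos_of_mem y hc₂ hc₄.le hθ
  simp only [fderiv_darL_apply hs, mul_one, mul_zero, add_zero, zero_add]
  exact abs_darScore_le hs (by positivity) (le_add_of_nonneg_right (sq_nonneg ε))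
    (sq_residual_div_darVar_le_of_mem y ε hc₂ hc₃.le hc₄ hc₅.le hθ₀ hθ)
    (one_div_darVar_le_of_mem y hc₂ hc₄.le hθ) (sq_div_darVar_le_of_mem y hc₂ hc₄ hθ)

/-- Pointwise uniform bound on the DAR(1) score in terms of the innovation (combining
inequalities (bound-1)–(p-l)): there is a constant `C` depending only on the constants
`c₁,…,c₅, φ₀, ω₀, α₀` such that for all `y, ε`, with `x = φ₀ y + ε √(ω₀ + α₀ y²)`, the
partial derivatives of `l(θ)` in the `φ`-, `ω`- and `α`-directions are bounded by
`C(1 + ε²)` uniformly over `θ ∈ Θ`. -/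
theorem stmt15 (c₁ c₂ c₃ c₄ c₅ : ℝ)
    (hc₁ : 0 < c₁) (hc₂ : 0 < c₂) (hc₃ : 0 < c₃) (hc₄ : 0 < c₄) (hc₅ : 0 < c₅)
    (φ₀ ω₀ α₀ : ℝ) (hθ₀ : (φ₀, ω₀, α₀) ∈ darTheta c₁ c₂ c₃ c₄ c₅) :
    ∃ C : ℝ, ∀ y ε : ℝ, ∀ θ ∈ darTheta c₁ c₂ c₃ c₄ c₅,
      |fderiv ℝ (darL y (φ₀ * y + ε * Real.sqrt (ω₀ + α₀ * y ^ 2))) θ (1, 0, 0)|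
          ≤ C * (1 + ε ^ 2) ∧
      |fderiv ℝ (darL y (φ₀ * y + ε * Real.sqrt (ω₀ + α₀ * y ^ 2))) θ (0, 1, 0)|
          ≤ C * (1 + ε ^ 2) ∧
      |fderiv ℝ (darL y (φ₀ * y + ε * Real.sqrt (ω₀ + α₀ * y ^ 2))) θ (0, 0, 1)|
          ≤ C * (1 + ε ^ 2) :=
  stmt15_general c₁ c₂ c₃ c₄ c₅ hc₂ hc₃ hc₄ hc₅ φ₀ ω₀ α₀ hθ₀
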